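/- Let G=(V,E) be a finite simple graph. Assign to each edge (u,v) ∈ E the weight w_{(u,v)} = −log(1 − p_{(u,v)}), where p_{(u,v)} = 8^{−2^{d_u+d_v−2}} and d_u, d_v are the degrees of u and v. If ℰ ⊆ E is a set of pairwise vertex-disjoint edges with total weight w_ℰ = ∑_{e∈ℰ} w_e, then a random game on G has no pure Nash equilibrium with probability at least 1 − exp(−w_ℰ). -/

import Mathlib

open scoped Classical
open Finset

/-- Best-response tables of a graphical game with binary strategies on vertex set `V`:
player `v`'s table assigns a best response `ω v τ ∈ {0,1}` to each (masked) strategy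
profile `τ`. Only the values at profiles vanishing outside the neighborhood of `v` are
ever read, so under the uniform measure the read entries are i.i.d. uniform on `{0,1}`. -/
abbrev Tables (V : Type) := V → (V → Bool) → Bool

/-- Restriction of a strategy profile to the neighborhood of `v` in `G`
(strategies outside the neighborhood are replaced by `false`). -/
noncomputable def maskN {V : Type} (G : SimpleGraph V) (v : V) (σ : V → Bool) : V → Bool :=
  fun u => if G.Adj v u then σ u else false

/-- `σ` is a pure Nash equilibrium of the game on `G` with tables `ω`:
every player plays a best response to the strategies of its neighbors. -/
def isPNE {V : Type} (G : SimpleGraph V) (ω : Tables V) (σ : V → Bool) : Prop :=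
  ∀ v, σ v = ω v (maskN G v σ)

/-- Probability of a table event under the uniform measure on best-response tables
(the random game on a fixed graph). -/
noncomputable def probT (V : Type) [Fintype V] [DecidableEq V] (A : Tables V → Prop) : ℝ :=
  (∑ ω : Tables V, if A ω then (1 : ℝ) else 0) / (Fintype.card (Tables V) : ℝ)

/-- The degree of a vertex `v` in `G`. -/
noncomputable def degOf {V : Type} [Fintype V] (G : SimpleGraph V) (v : V) : ℕ :=
  (univ.filter fun u => G.Adj v u).card


/-! Call an edge `(u, v)` a matching-pennies edge of the game if `u`'s best response copies
`v`'s strategy and `v`'s best response flips `u`'s, or vice versa; such an edge rules out every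
pure Nash equilibrium. Player `u`'s table has `2 ^ d_u` entries that are ever read, so a given
edge is matching-pennies with probability `2 · 2^{-2^{d_u}} · 2^{-2^{d_v}} ≥ p_{(u,v)}`. For
vertex-disjoint edges these events are determined by disjoint sets of tables, hence independent,
and the probability that no edge of `ℰ` is matching-pennies is at most
`∏ (1 - p_e) = exp(-w_ℰ)`. -/

noncomputable def uniformProb {α : Type*} [Fintype α] (A : α → Prop) : ℝ :=
  (∑ a, if A a then (1 : ℝ) else 0) / Fintype.card α

section UniformProb

variable {α β : Type*} [Fintype α] [Fintype β]

theorem uniformProb_congr {A B : α → Prop} (h : ∀ a, A a ↔ B a) :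
    uniformProb A = uniformProb B := by
  rw [show A = B from funext fun a => propext (h a)]

theorem uniformProb_nonneg (A : α → Prop) : 0 ≤ uniformProb A :=
  div_nonneg (sum_nonneg fun a _ => by split_ifs <;> norm_num) (Nat.cast_nonneg _)

theorem uniformProb_mono {A B : α → Prop} (h : ∀ a, A a → B a) :
    uniformProb A ≤ uniformProb B := by
  refine div_le_div_of_nonneg_right (sum_le_sum fun a _ => ?_) (Nat.cast_nonneg _)
  by_cases hA : A a
  · simp [hA, h a hA]
  · by_cases hB : B a <;> simp [hA, hB]

theorem uniformProb_or_of_disjoint {A B : α → Prop} (h : ∀ a, A a → ¬ B a) :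
    uniformProb (fun a => A a ∨ B a) = uniformProb A + uniformProb B := by
  rw [uniformProb, uniformProb, uniformProb, ← add_div, ← sum_add_distrib]
  congr 1
  refine sum_congr rfl fun a _ => ?_
  by_cases hA : A a
  · simp [hA, h a hA]
  · simp [hA]

theorem uniformProb_true [Nonempty α] : uniformProb (fun _ : α => True) = 1 := by
  simp [uniformProb]

theorem uniformProb_not [Nonempty α] (A : α → Prop) :
    uniformProb (fun a => ¬ A a) = 1 - uniformProb A := by
  rw [← uniformProb_true (α := α), eq_sub_iff_add_eq,
    ← uniformProb_or_of_disjoint fun a h h' => h h']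
  exact uniformProb_congr fun a => by tauto

theorem uniformProb_le_one [Nonempty α] (A : α → Prop) : uniformProb A ≤ 1 := by
  linarith [uniformProb_nonneg fun a => ¬ A a, uniformProb_not A]

theorem uniformProb_singleton (a₀ : α) :
    uniformProb (· = a₀) = (Fintype.card α : ℝ)⁻¹ := by
  simp [uniformProb]

theorem uniformProb_comp_equiv (e : α ≃ β) (A : β → Prop) :
    uniformProb (A ∘ e) = uniformProb A := by
  rw [uniformProb, uniformProb, Fintype.card_congr e]
  congr 1
  exact Equiv.sum_comp e fun b => if A b then (1 : ℝ) else 0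

theorem uniformProb_prod (A : α → Prop) (B : β → Prop) :
    uniformProb (fun z : α × β => A z.1 ∧ B z.2) = uniformProb A * uniformProb B := by
  rw [uniformProb, uniformProb, uniformProb, div_mul_div_comm, sum_mul_sum,
    Fintype.sum_prod_type, Fintype.card_prod, Nat.cast_mul]
  simp only [ite_zero_mul_ite_zero, mul_one]
  -- the two sides differ only in their `Decidable (A x ∧ B y)` instances
  convert rfl

theorem uniformProb_fst [Nonempty β] (A : α → Prop) :
    uniformProb (fun z : α × β => A z.1) = uniformProb A := by
  simpa [uniformProb_true] using uniformProb_prod A fun _ : β => True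

theorem uniformProb_snd [Nonempty α] (B : β → Prop) :
    uniformProb (fun z : α × β => B z.2) = uniformProb B := by
  simpa [uniformProb_true] using uniformProb_prod (fun _ : α => True) B

end UniformProb

section Pi

variable {ι β : Type*} [Fintype ι] [DecidableEq ι] [Fintype β] [Nonempty β]

theorem uniformProb_and_of_dependsOn {A B : (ι → β) → Prop} {s : Set ι}
    (hA : DependsOn A s) (hB : DependsOn B sᶜ) :
    uniformProb (fun ω => A ω ∧ B ω) = uniformProb A * uniformProb B := by
  classical
  obtain ⟨b⟩ := ‹Nonempty β›
  let e := (Equiv.piEquivPiSubtypeProd (· ∈ s) fun _ => β).symm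
  let A' : ({i // i ∈ s} → β) → Prop := fun x => A (e (x, fun _ => b))
  let B' : ({i // i ∉ s} → β) → Prop := fun y => B (e (fun _ => b, y))
  have hA' : ∀ z, A (e z) = A' z.1 := fun z => hA fun i (hi : i ∈ s) => by simp [e, hi]
  have hB' : ∀ z, B (e z) = B' z.2 := fun z => hB fun i (hi : i ∉ s) => by simp [e, hi]
  have hAA' : uniformProb A = uniformProb A' := by
    rw [← uniformProb_comp_equiv e, ← uniformProb_fst (β := {i // i ∉ s} → β) A']
    exact uniformProb_congr fun z => by rw [Function.comp_apply, hA' z]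
  have hBB' : uniformProb B = uniformProb B' := by
    rw [← uniformProb_comp_equiv e, ← uniformProb_snd (α := {i // i ∈ s} → β) B']
    exact uniformProb_congr fun z => by rw [Function.comp_apply, hB' z]
  rw [hAA', hBB', ← uniformProb_prod, ← uniformProb_comp_equiv e]
  exact uniformProb_congr fun z => by rw [Function.comp_apply, hA' z, hB' z]

theorem uniformProb_forall_of_pairwiseDisjoint {κ : Type*} (t : Finset κ)
    {A : κ → (ι → β) → Prop} {S : κ → Set ι} (hA : ∀ k ∈ t, DependsOn (A k) (S k))
    (hS : (t : Set κ).PairwiseDisjoint S) :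
    uniformProb (fun ω => ∀ k ∈ t, A k ω) = ∏ k ∈ t, uniformProb (A k) := by
  classical
  induction t using Finset.induction_on with
  | empty => simpa using uniformProb_true
  | insert a t ha ih =>
    have hrest : DependsOn (fun ω => ∀ k ∈ t, A k ω) (S a)ᶜ := fun x y hxy => by
      refine propext (forall₂_congr fun k hk => ?_)
      have hdisj : Disjoint (S k) (S a) :=
        hS (by simp [hk]) (by simp) fun hka => ha (hka ▸ hk)
      rw [(hA k (mem_insert_of_mem hk)).mono hdisj.subset_compl_right hxy]
    rw [prod_insert ha, ← ih (fun k hk => hA k (mem_insert_of_mem hk))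
      (hS.subset (by simp)), ← uniformProb_and_of_dependsOn (hA a (mem_insert_self a t)) hrest]
    exact uniformProb_congr fun ω => forall_mem_insert _ _ _

theorem uniformProb_exists_of_pairwiseDisjoint {κ : Type*} (t : Finset κ)
    {A : κ → (ι → β) → Prop} {S : κ → Set ι} (hA : ∀ k ∈ t, DependsOn (A k) (S k))
    (hS : (t : Set κ).PairwiseDisjoint S) :
    uniformProb (fun ω => ∃ k ∈ t, A k ω) = 1 - ∏ k ∈ t, (1 - uniformProb (A k)) := by
  have hnot : ∀ k ∈ t, DependsOn (fun ω => ¬ A k ω) (S k) := fun k hk x y hxy =>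
    congrArg Not (hA k hk hxy)
  rw [prod_congr rfl fun k _ => (uniformProb_not (A k)).symm,
    ← uniformProb_forall_of_pairwiseDisjoint t hnot hS, ← uniformProb_not]
  exact uniformProb_congr fun ω => by simp

theorem uniformProb_comp_eval (i : ι) (A : β → Prop) :
    uniformProb (fun ω : ι → β => A (ω i)) = uniformProb A := by
  rw [← uniformProb_comp_equiv (Equiv.funSplitAt i β).symm,
    ← uniformProb_fst (β := {j // j ≠ i} → β) A]
  exact uniformProb_congr fun z => by simp [Equiv.funSplitAt]

end Pi

theorem uniformProb_forall_apply_eq_of_injective {α β γ : Type*} [Fintype α] [Fintype β]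
    [DecidableEq β] [Fintype γ] [Nonempty γ] {φ : α → β} (hφ : Function.Injective φ)
    (c : α → γ) :
    uniformProb (fun h : β → γ => ∀ a, h (φ a) = c a) =
      (Fintype.card γ : ℝ)⁻¹ ^ Fintype.card α := by
  classical
  let f := Equiv.ofInjective φ hφ
  let e := Equiv.piEquivPiSubtypeProd (· ∈ Set.range φ) fun _ => γ
  have hevent : ∀ h : β → γ, (∀ a, h (φ a) = c a) ↔ (e h).1 = c ∘ f.symm := by
    intro h
    rw [funext_iff, ← f.forall_congr_right]
    simp [e, f]
  rw [uniformProb_congr hevent]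
  change uniformProb ((fun z => z.1 = c ∘ f.symm) ∘ e) = _
  rw [uniformProb_comp_equiv, uniformProb_fst (· = c ∘ f.symm), uniformProb_singleton,
    Fintype.card_fun, Fintype.card_congr f.symm]
  push_cast
  rw [inv_pow]

theorem probT_eq_uniformProb {V : Type} [Fintype V] [DecidableEq V] (A : Tables V → Prop) :
    probT V A = uniformProb A := rfl

section Game

variable {V : Type} (G : SimpleGraph V)

def RespondsBy (w x : V) (F : Bool → Bool) (ω : Tables V) : Prop :=
  ∀ σ, ω w (maskN G w σ) = F (σ x)

def MatchingPennies (e : V × V) (ω : Tables V) : Prop :=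
  (RespondsBy G e.1 e.2 id ω ∧ RespondsBy G e.2 e.1 not ω) ∨
    (RespondsBy G e.1 e.2 not ω ∧ RespondsBy G e.2 e.1 id ω)

noncomputable def neighborProfile (w : V) (g : {u // G.Adj w u} → Bool) : V → Bool :=
  Function.extend Subtype.val g fun _ => false

variable {G}

theorem not_isPNE_of_matchingPennies {e : V × V} {ω : Tables V} (h : MatchingPennies G e ω)
    (σ : V → Bool) : ¬ isPNE G ω σ := fun hσ => by
  have h₁ := hσ e.1
  have h₂ := hσ e.2
  rcases h with ⟨r₁, r₂⟩ | ⟨r₁, r₂⟩ <;>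
  · rw [r₁ σ] at h₁
    rw [r₂ σ] at h₂
    cases hu : σ e.1 <;> cases hv : σ e.2 <;> simp_all

theorem respondsBy_dependsOn (w x : V) (F : Bool → Bool) :
    DependsOn (RespondsBy G w x F) {w} := fun ω ω' h => by
  rw [RespondsBy, RespondsBy, h w rfl]

theorem matchingPennies_dependsOn (e : V × V) :
    DependsOn (MatchingPennies G e) {e.1, e.2} := fun ω ω' h => by
  simp only [MatchingPennies, RespondsBy, h e.1 (by simp), h e.2 (by simp)]

theorem neighborProfile_injective (w : V) : Function.Injective (neighborProfile G w) :=
  Function.extend_injective Subtype.val_injective _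

theorem neighborProfile_apply {w : V} (g : {u // G.Adj w u} → Bool) (u : {u // G.Adj w u}) :
    neighborProfile G w g u = g u :=
  Subtype.val_injective.extend_apply g _ u

theorem maskN_eq_neighborProfile (w : V) (σ : V → Bool) :
    maskN G w σ = neighborProfile G w fun u => σ u := by
  funext u
  by_cases hu : G.Adj w u
  · exact (if_pos hu).trans
      (neighborProfile_apply (fun v : {u // G.Adj w u} => σ v) ⟨u, hu⟩).symm
  · rw [maskN, if_neg hu, neighborProfile,
      Function.extend_apply' _ _ _ fun ⟨v, hv⟩ => hu (hv ▸ v.2)]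

theorem respondsBy_iff_neighborProfile {w x : V} (hadj : G.Adj w x) (F : Bool → Bool)
    (ω : Tables V) :
    RespondsBy G w x F ω ↔ ∀ g, ω w (neighborProfile G w g) = F (g ⟨x, hadj⟩) := by
  refine ⟨fun h g => ?_, fun h σ => by rw [maskN_eq_neighborProfile]; exact h _⟩
  have hmask : maskN G w (neighborProfile G w g) = neighborProfile G w g := by
    rw [maskN_eq_neighborProfile]
    exact congrArg _ (funext (neighborProfile_apply g))
  rw [← hmask, ← neighborProfile_apply g ⟨x, hadj⟩]
  exact h _

theorem uniformProb_respondsBy [Fintype V] [DecidableEq V] {w x : V} (hadj : G.Adj w x)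
    (F : Bool → Bool) : uniformProb (RespondsBy G w x F) = (2⁻¹ : ℝ) ^ 2 ^ degOf G w := by
  let P : ((V → Bool) → Bool) → Prop := fun h =>
    ∀ g, h (neighborProfile G w g) = F (g ⟨x, hadj⟩)
  calc uniformProb (RespondsBy G w x F) = uniformProb fun ω : Tables V => P (ω w) :=
        uniformProb_congr (respondsBy_iff_neighborProfile hadj F)
    _ = uniformProb P := uniformProb_comp_eval w P
    _ = (2⁻¹ : ℝ) ^ 2 ^ degOf G w := by
        rw [uniformProb_forall_apply_eq_of_injective (neighborProfile_injective w)]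
        simp [Fintype.card_subtype, degOf]

theorem uniformProb_matchingPennies [Fintype V] [DecidableEq V] {e : V × V}
    (hadj : G.Adj e.1 e.2) : uniformProb (MatchingPennies G e) =
      2 * ((2⁻¹ : ℝ) ^ 2 ^ degOf G e.1 * (2⁻¹ : ℝ) ^ 2 ^ degOf G e.2) := by
  have hpair : ∀ F₁ F₂,
      uniformProb (fun ω => RespondsBy G e.1 e.2 F₁ ω ∧ RespondsBy G e.2 e.1 F₂ ω) =
        (2⁻¹ : ℝ) ^ 2 ^ degOf G e.1 * (2⁻¹ : ℝ) ^ 2 ^ degOf G e.2 := fun F₁ F₂ => by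
    rw [uniformProb_and_of_dependsOn (respondsBy_dependsOn e.1 e.2 F₁)
      ((respondsBy_dependsOn e.2 e.1 F₂).mono (by simpa using hadj.ne)),
      uniformProb_respondsBy hadj, uniformProb_respondsBy hadj.symm]
  have hdisj : ∀ ω, RespondsBy G e.1 e.2 id ω ∧ RespondsBy G e.2 e.1 not ω →
      ¬ (RespondsBy G e.1 e.2 not ω ∧ RespondsBy G e.2 e.1 id ω) :=
    fun _ ⟨h, _⟩ ⟨h', _⟩ => by
      simpa using (h fun _ => true).symm.trans (h' fun _ => true)
  exact (uniformProb_or_of_disjoint hdisj).trans (by rw [hpair, hpair]; ring)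

theorem one_le_degOf [Fintype V] {w x : V} (h : G.Adj w x) : 1 ≤ degOf G w :=
  card_pos.2 ⟨x, by simp [h]⟩

end Game

theorem two_pow_add_two_pow_le {a b : ℕ} (ha : 1 ≤ a) (hb : 1 ≤ b) :
    2 ^ a + 2 ^ b ≤ 1 + 3 * 2 ^ (a + b - 2) := by
  obtain ⟨a, rfl⟩ := Nat.exists_eq_add_of_le' ha
  obtain ⟨b, rfl⟩ := Nat.exists_eq_add_of_le' hb
  have hx : 1 ≤ 2 ^ a := Nat.one_le_two_pow
  have hy : 1 ≤ 2 ^ b := Nat.one_le_two_pow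
  rw [show a + 1 + (b + 1) - 2 = a + b by omega, pow_succ, pow_succ, pow_add]
  zify at hx hy ⊢
  nlinarith [mul_nonneg (sub_nonneg.2 hx) (sub_nonneg.2 hy)]

theorem eight_rpow_neg_two_rpow_le {a b : ℕ} (ha : 1 ≤ a) (hb : 1 ≤ b) :
    (8 : ℝ) ^ (-((2 : ℝ) ^ ((a : ℝ) + (b : ℝ) - 2))) ≤
      2 * ((2⁻¹ : ℝ) ^ 2 ^ a * (2⁻¹ : ℝ) ^ 2 ^ b) := by
  have hn : (a : ℝ) + (b : ℝ) - 2 = ((a + b - 2 : ℕ) : ℝ) := by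
    rw [Nat.cast_sub (by omega)]
    push_cast
    ring
  have hlhs : (8 : ℝ) ^ (-((2 : ℝ) ^ ((a : ℝ) + (b : ℝ) - 2))) =
      (2⁻¹ : ℝ) ^ (3 * 2 ^ (a + b - 2)) := by
    have h2 : (2 : ℝ) ^ ((a : ℝ) + (b : ℝ) - 2) = ((2 ^ (a + b - 2) : ℕ) : ℝ) := by
      rw [hn, Real.rpow_natCast]
      push_cast
      rfl
    rw [h2, Real.rpow_neg (by norm_num), Real.rpow_natCast, pow_mul, ← inv_pow]
    norm_num
  obtain ⟨c, hc⟩ : ∃ c, 2 ^ a + 2 ^ b = c + 1 :=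
    ⟨_, (Nat.succ_pred_eq_of_pos (by positivity)).symm⟩
  have hrhs : 2 * ((2⁻¹ : ℝ) ^ 2 ^ a * (2⁻¹ : ℝ) ^ 2 ^ b) = (2⁻¹ : ℝ) ^ c := by
    rw [← pow_add, hc, pow_succ]
    ring
  rw [hlhs, hrhs]
  have hpow := two_pow_add_two_pow_le ha hb
  exact pow_le_pow_of_le_one (by norm_num) (by norm_num) (by omega)

/-- **Weighted independent edge sets.** Give each edge `(u,v)` weight
`w_{(u,v)} = -log(1 - p_{(u,v)})` with `p_{(u,v)} = 8^{-2^{d_u + d_v - 2}}`. If `ℰ` is a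
set of pairwise vertex-disjoint edges of total weight `w_ℰ`, then a random game on `G`
has no pure Nash equilibrium with probability at least `1 - exp(-w_ℰ)`. -/
theorem stmt9 {V : Type} [Fintype V] [DecidableEq V] (G : SimpleGraph V)
    (E' : Finset (V × V))
    (hedge : ∀ e ∈ E', G.Adj e.1 e.2)
    (hdisj : ∀ e ∈ E', ∀ f ∈ E', e ≠ f →
      e.1 ≠ f.1 ∧ e.1 ≠ f.2 ∧ e.2 ≠ f.1 ∧ e.2 ≠ f.2) :
    1 - Real.exp (-(∑ e ∈ E',
        -Real.log (1 - (8 : ℝ) ^ (-((2 : ℝ) ^ ((degOf G e.1 : ℝ) + (degOf G e.2 : ℝ) - 2)))))) ≤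
      probT V (fun ω => ¬ ∃ σ, isPNE G ω σ) := by
  set p : V × V → ℝ := fun e =>
    (8 : ℝ) ^ (-((2 : ℝ) ^ ((degOf G e.1 : ℝ) + (degOf G e.2 : ℝ) - 2)))
  show 1 - Real.exp (-∑ e ∈ E', -Real.log (1 - p e)) ≤ _
  have hp_lt_one : ∀ e, p e < 1 := fun e =>
    Real.rpow_lt_one_of_one_lt_of_neg (by norm_num) (neg_lt_zero.2 (by positivity))
  have hp_le : ∀ e ∈ E', p e ≤ uniformProb (MatchingPennies G e) := fun e he => by
    rw [uniformProb_matchingPennies (hedge e he)]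
    exact eight_rpow_neg_two_rpow_le (one_le_degOf (hedge e he))
      (one_le_degOf (hedge e he).symm)
  have hS : (E' : Set (V × V)).PairwiseDisjoint fun e => ({e.1, e.2} : Set V) := by
    intro e he f hf hef
    obtain ⟨h₁, h₂, h₃, h₄⟩ := hdisj e he f hf hef
    simp [Set.disjoint_left, *]
  have hexp : Real.exp (-∑ e ∈ E', -Real.log (1 - p e)) = ∏ e ∈ E', (1 - p e) := by
    rw [sum_neg_distrib, neg_neg, Real.exp_sum]
    exact prod_congr rfl fun e he => Real.exp_log (sub_pos.2 (hp_lt_one e))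
  rw [hexp, probT_eq_uniformProb]
  calc 1 - ∏ e ∈ E', (1 - p e) ≤ 1 - ∏ e ∈ E', (1 - uniformProb (MatchingPennies G e)) :=
        sub_le_sub_left (prod_le_prod (fun e _ => sub_nonneg.2 (uniformProb_le_one _))
          fun e he => sub_le_sub_left (hp_le e he) 1) 1
    _ = uniformProb fun ω => ∃ e ∈ E', MatchingPennies G e ω :=
        (uniformProb_exists_of_pairwiseDisjoint E' (fun e _ => matchingPennies_dependsOn e)
          hS).symm
    _ ≤ uniformProb fun ω => ¬ ∃ σ, isPNE G ω σ :=
        uniformProb_mono fun _ ⟨_, _, he⟩ ⟨σ, hσ⟩ => not_isPNE_of_matchingPennies he σ hσ
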